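/- arXiv:0805.1147 — 2 statements merged into one kernel-verified Lean document; each statement's English description precedes it below -/
import Mathlib

section
/- Let A be a cellular algebra over a field R with cell datum (Λ⁺, T, C, *). For λ ∈ Λ⁺ and μ ∈ Λ⁺₀ (i.e., L^μ ≠ 0), the multiplicity of the right simple module L^μ in a composition series of the right standard module W^λ equals the multiplicity of the left simple module ᶠL^μ in a composition series of the left standard module ᶠW^λ. -/
open MulOpposite

noncomputable section

universe u

section CompFactors

variable (A : Type u) [Ring A]

/-- The `i`-th factor of a series of submodules. -/
abbrev CompSeriesFactor {M : Type u} [AddCommGroup M] [Module A M]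
    (s : CompositionSeries (Submodule A M)) (i : Fin s.length) : Type u :=
  ↥(s i.succ) ⧸ Submodule.comap (s i.succ).subtype (s i.castSucc)

open Classical in
/-- The multiplicity of `N` among the composition factors of `M` (returning `0` if `M`
has no composition series); by the Jordan–Hölder theorem this does not depend on the
choice of composition series. -/
def compMult (M : Type u) [AddCommGroup M] [Module A M]
    (N : Type u) [AddCommGroup N] [Module A N] : ℕ :=
  if h : ∃ s : CompositionSeries (Submodule A M), s.head = ⊥ ∧ s.last = ⊤ then
    (Finset.univ.filter fun i : Fin h.choose.length =>
      Nonempty (CompSeriesFactor A h.choose i ≃ₗ[A] N)).card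
  else 0

/-- `N` is (isomorphic to) a composition factor, i.e. a simple subquotient, of `M`. -/
def IsCompFactor (M N : Type u) [AddCommGroup M] [Module A M]
    [AddCommGroup N] [Module A N] : Prop :=
  ∃ p q : Submodule A M, p ≤ q ∧
    IsSimpleModule A (↥q ⧸ Submodule.comap q.subtype p) ∧
    Nonempty ((↥q ⧸ Submodule.comap q.subtype p) ≃ₗ[A] N)

/-- `M₁` and `M₂` have a common composition factor. -/
def ShareFactor (M₁ M₂ : Type u) [AddCommGroup M₁] [Module A M₁]
    [AddCommGroup M₂] [Module A M₂] : Prop :=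
  ∃ (p q : Submodule A M₁) (p' q' : Submodule A M₂), p ≤ q ∧ p' ≤ q' ∧
    IsSimpleModule A (↥q ⧸ Submodule.comap q.subtype p) ∧
    Nonempty ((↥q ⧸ Submodule.comap q.subtype p) ≃ₗ[A]
      (↥q' ⧸ Submodule.comap q'.subtype p'))

/-- `e` is a primitive central idempotent (a block idempotent) of `A`. -/
def IsPrimCentralIdem (e : A) : Prop :=
  IsIdempotentElem e ∧ e ∈ Set.center A ∧ e ≠ 0 ∧
    ∀ f g : A, IsIdempotentElem f → IsIdempotentElem g → f ∈ Set.center A →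
      g ∈ Set.center A → f * g = 0 → e = f + g → f = 0 ∨ g = 0

/-- A module belongs to the block of the central idempotent `e` when `e` acts as
the identity on it. -/
def InBlock (e : A) (M : Type u) [AddCommGroup M] [Module A M] : Prop :=
  ∀ m : M, e • m = m

/-- `P` is a projective cover of `L`. -/
def IsProjCover (P L : Type u) [AddCommGroup P] [Module A P]
    [AddCommGroup L] [Module A L] : Prop :=
  Module.Projective A P ∧ ∃ f : P →ₗ[A] L, Function.Surjective f ∧
    ∀ N : Submodule A P, N ⊔ LinearMap.ker f = ⊤ → N = ⊤

end CompFactors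

/-- The bilinear form on `ι → R` induced by a matrix `φ`. -/
def formSum {R ι : Type u} [CommRing R] [Fintype ι] (φ : ι → ι → R) (x y : ι → R) : R :=
  ∑ s, ∑ t, x s * φ s t * y t

section Cellular

variable (R A : Type u) [CommRing R] [Ring A] [Algebra R A]
variable (Λp : Type u) [PartialOrder Λp] (T : Λp → Type u) [∀ l, Fintype (T l)]

/-- A cell datum (Graham–Lehrer) for the `R`-algebra `A`: a cellular basis
`c l s t` indexed by pairs of elements of `T l` for `l` in the poset `Λp`, an
anti-automorphism `star` swapping the two indices, and structure constants
`coeff` for right multiplication, acting on the second index modulo higher terms. -/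
structure CellDatum where
  c : ∀ l, T l → T l → A
  basis : Module.Basis ((l : Λp) × (T l × T l)) R A
  basis_eq : ∀ l s t, basis ⟨l, (s, t)⟩ = c l s t
  star : A →ₗ[R] A
  star_mul : ∀ a b, star (a * b) = star b * star a
  star_c : ∀ l s t, star (c l s t) = c l t s
  coeff : ∀ l, T l → A → T l → R
  mul_rule : ∀ (l) (s t : T l) (a : A),
    c l s t * a - ∑ v, coeff l t a v • c l s v ∈
      Submodule.span R {x : A | ∃ l' s' t', l < l' ∧ x = c l' s' t'}

variable {R A Λp T}

namespace CellDatum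

variable (D : CellDatum R A Λp T)

/-- The span of the cellular basis elements with index strictly above `l`. -/
def Aup (l : Λp) : Submodule R A :=
  Submodule.span R {x : A | ∃ l' s' t', l < l' ∧ x = D.c l' s' t'}

/-- The span of the cellular basis elements with index in `P`. -/
def cellSpan (P : Set Λp) : Submodule R A :=
  Submodule.span R {x : A | ∃ l s t, l ∈ P ∧ x = D.c l s t}

/-- The data of right standard (cell) modules: each `T l → R` is a right `A`-module
(i.e. a module over `Aᵐᵒᵖ`), the action is `R`-bilinear, and on the standard basis it is
given by the structure constants of the cell datum. -/
def RightStd [∀ l, DecidableEq (T l)] [∀ l, Module Aᵐᵒᵖ (T l → R)] : Prop :=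
  (∀ (l : Λp) (r : R) (a : Aᵐᵒᵖ) (x : T l → R), a • (r • x) = r • (a • x)) ∧
  (∀ (l : Λp) (t : T l) (a : A),
    (op a) • (Pi.single t 1 : T l → R) = fun v => D.coeff l t a v)

/-- The data of left standard (cell) modules. -/
def LeftStd [∀ l, DecidableEq (T l)] [∀ l, Module A (T l → R)] : Prop :=
  (∀ (l : Λp) (r : R) (a : A) (x : T l → R), a • (r • x) = r • (a • x)) ∧
  (∀ (l : Λp) (t : T l) (a : A),
    a • (Pi.single t 1 : T l → R) = fun v => D.coeff l t (D.star a) v)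

/-- `φ` is the matrix of the canonical bilinear form on the standard modules:
`c l u s * c l t v ≡ φ l s t • c l u v` modulo `A^{∨l}`. -/
def FormData (φ : ∀ l, T l → T l → R) : Prop :=
  ∀ (l : Λp) (s t u v : T l), D.c l u s * D.c l t v - φ l s t • D.c l u v ∈ D.Aup l

section Idem

variable {Λt M X : Type u} [PartialOrder Λt] [PartialOrder X] [Fintype M]

/-- Assumptions (A1)–(A4): `ι : Λp → Λt` realizes the cell poset inside the
bigger poset `Λt`, `κ : M → Λt` realizes the index set of the orthogonal idempotent
decomposition `1 = ∑ e μ`, each `e μ` lies in the span of the `c l s t` with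
`ι l ≥ κ μ`, and every column of the cellular basis is fixed by some `e μ`. -/
structure IdemData (ι : Λp → Λt) (κ : M → Λt) (e : M → A) : Prop where
  order_iff : ∀ l l', ι l ≤ ι l' ↔ l ≤ l'
  kappa_inj : Function.Injective κ
  ne_zero : ∀ μ, e μ ≠ 0
  idem : ∀ μ, e μ * e μ = e μ
  orth : ∀ μ ν, μ ≠ ν → e μ * e ν = 0
  sum_one : ∑ μ, e μ = 1
  mem_span : ∀ μ, e μ ∈ Submodule.span R {x : A | ∃ l s t, κ μ ≤ ι l ∧ x = D.c l s t}
  exists_idem : ∀ (l) (t : T l), ∃ μ, (∀ s, D.c l s t * e μ = D.c l s t) ∧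
    (∀ u, e μ * D.c l t u = D.c l t u)

/-- `T(λ,μ)`: the indices `t` whose column (resp. row) of the cellular basis is fixed
by right (resp. left) multiplication by `e μ`. -/
def Tset (e : M → A) (l : Λp) (μ : M) : Set (T l) :=
  {t | (∀ s, D.c l s t * e μ = D.c l s t) ∧ (∀ u, e μ * D.c l t u = D.c l t u)}

/-- `T⁺_α(λ)`. -/
def Tplus (e : M → A) (ι : Λp → Λt) (κ : M → Λt) (α : Λt → X) (l : Λp) : Set (T l) :=
  {t | ∃ μ, t ∈ D.Tset e l μ ∧ α (ι l) = α (κ μ)}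

/-- `T⁻_α(λ)`. -/
def Tminus (e : M → A) (ι : Λp → Λt) (κ : M → Λt) (α : Λt → X) (l : Λp) : Set (T l) :=
  {t | ∃ μ, t ∈ D.Tset e l μ ∧ α (κ μ) < α (ι l)}

/-- `I(λ,ε)`: `T⁺_α(λ)` for `ε = false` and `T⁻_α(λ)` for `ε = true`. -/
def Iset (e : M → A) (ι : Λp → Λt) (κ : M → Λt) (α : Λt → X) (l : Λp) : Bool → Set (T l)
  | false => D.Tplus e ι κ α l
  | true => D.Tminus e ι κ α l

/-- `J̃(λ,ε)`: `T⁺_α(λ)` for `ε = false` and all of `T(λ)` for `ε = true`. -/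
def Jset (e : M → A) (ι : Λp → Λt) (κ : M → Λt) (α : Λt → X) (l : Λp) : Bool → Set (T l)
  | false => D.Tplus e ι κ α l
  | true => Set.univ

/-- The Levi type subalgebra `A^α` (as a submodule). -/
def levi (e : M → A) (ι : Λp → Λt) (κ : M → Λt) (α : Λt → X) : Submodule R A :=
  Submodule.span R {x : A | ∃ l ε s t, s ∈ D.Iset e ι κ α l ε ∧ t ∈ D.Iset e ι κ α l ε ∧
    x = D.c l s t}

/-- The parabolic type subalgebra `Ã^α` (as a submodule). -/
def parab (e : M → A) (ι : Λp → Λt) (κ : M → Λt) (α : Λt → X) : Submodule R A :=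
  Submodule.span R {x : A | ∃ l ε s t, s ∈ D.Iset e ι κ α l ε ∧ t ∈ D.Jset e ι κ α l ε ∧
    x = D.c l s t}

/-- The span of the elements of the cellular basis of `A^α` of index strictly
above `(l,ε)` in `Ω`. -/
def upperOm (e : M → A) (ι : Λp → Λt) (κ : M → Λt) (α : Λt → X) (p : Λp × Bool) :
    Submodule R A :=
  Submodule.span R {x : A | ∃ (q : Λp × Bool) (s t : T q.1),
    ((p.2 < q.2) ∨ (p.2 = q.2 ∧ p.1 < q.1)) ∧
    s ∈ D.Iset e ι κ α q.1 q.2 ∧ t ∈ D.Iset e ι κ α q.1 q.2 ∧ x = D.c q.1 s t}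

/-- The span of the elements of the standard basis of `Ã^α` of index strictly
above `(l,ε)` in `Ω`. -/
def upperOmParab (e : M → A) (ι : Λp → Λt) (κ : M → Λt) (α : Λt → X) (p : Λp × Bool) :
    Submodule R A :=
  Submodule.span R {x : A | ∃ (q : Λp × Bool) (s t : T q.1),
    ((p.2 < q.2) ∨ (p.2 = q.2 ∧ p.1 < q.1)) ∧
    s ∈ D.Iset e ι κ α q.1 q.2 ∧ t ∈ D.Jset e ι κ α q.1 q.2 ∧ x = D.c q.1 s t}

end Idem

end CellDatum

end Cellular

/-! The anti-involution `star` is a ring isomorphism `A ≃+* Aᵐᵒᵖ`, and on the common underlying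
space `T λ → R` the left standard module is the right one twisted by it. The canonical form is
symmetric (apply `star` to its defining congruence), so the left and right radicals coincide and
`ᶠL^μ` is the same twist of `L^μ`. Composition multiplicities are invariant under such a twist:
a composition series transports along the semilinear identification, and Jordan–Hölder compares
it with any other. -/

section SemilinearTransport

variable {A B : Type u} [Ring A] [Ring B] {σ : A →+* B} {σ' : B →+* A}
  [RingHomInvPair σ σ'] [RingHomInvPair σ' σ]
variable {M M' : Type u} [AddCommGroup M] [AddCommGroup M'] [Module A M] [Module B M']

theorem nonempty_linearEquiv_iff_of_semilinearEquiv {N N' : Type u} [AddCommGroup N]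
    [AddCommGroup N'] [Module A N] [Module B N'] (e : M ≃ₛₗ[σ] M') (f : N ≃ₛₗ[σ] N') :
    Nonempty (M ≃ₗ[A] N) ↔ Nonempty (M' ≃ₗ[B] N') :=
  ⟨fun ⟨g⟩ => ⟨e.symm.trans (g.trans f)⟩, fun ⟨g⟩ => ⟨e.trans (g.trans f.symm)⟩⟩

def CompositionSeries.mapSemilinearEquiv (e : M ≃ₛₗ[σ] M')
    (s : CompositionSeries (Submodule A M)) : CompositionSeries (Submodule B M') :=
  s.map ⟨Submodule.orderIsoMapComap e, (apply_covBy_apply_iff _).2⟩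

def subquotientEquivMap (e : M ≃ₛₗ[σ] M') (p q : Submodule A M) :
    (q ⧸ p.comap q.subtype) ≃ₛₗ[σ]
      (q.map (e : M →ₛₗ[σ] M') ⧸ (p.map (e : M →ₛₗ[σ] M')).comap
        (q.map (e : M →ₛₗ[σ] M')).subtype) :=
  Submodule.Quotient.equiv _ _ (e.submoduleMap q) (by ext; simp)

theorem exists_compositionSeries_of_semilinearEquiv (e : M ≃ₛₗ[σ] M')
    (h : ∃ s : CompositionSeries (Submodule A M), s.head = ⊥ ∧ s.last = ⊤) :
    ∃ s : CompositionSeries (Submodule B M'), s.head = ⊥ ∧ s.last = ⊤ := by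
  obtain ⟨s, hhead, hlast⟩ := h
  exact ⟨s.mapSemilinearEquiv e, by simp [CompositionSeries.mapSemilinearEquiv, hhead],
    by simp [CompositionSeries.mapSemilinearEquiv, hlast]⟩

theorem compMult_eq_of_semilinearEquiv {N N' : Type u} [AddCommGroup N] [AddCommGroup N']
    [Module A N] [Module B N'] (e : M ≃ₛₗ[σ] M') (f : N ≃ₛₗ[σ] N') :
    compMult A M N = compMult B M' N' := by
  classical
  by_cases hM : ∃ s : CompositionSeries (Submodule A M), s.head = ⊥ ∧ s.last = ⊤
  · have hM' := exists_compositionSeries_of_semilinearEquiv e hM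
    rw [compMult, compMult, dif_pos hM, dif_pos hM']
    obtain ⟨k, hk⟩ : (hM.choose.mapSemilinearEquiv e).Equivalent hM'.choose :=
      CompositionSeries.jordan_holder _ _
        (by simp [CompositionSeries.mapSemilinearEquiv, hM.choose_spec.1, hM'.choose_spec.1])
        (by simp [CompositionSeries.mapSemilinearEquiv, hM.choose_spec.2, hM'.choose_spec.2])
    refine Finset.card_equiv k fun i => ?_
    simp only [Finset.mem_filter, Finset.mem_univ, true_and]
    rw [nonempty_linearEquiv_iff_of_semilinearEquiv (subquotientEquivMap e _ _) f]
    exact ⟨fun ⟨g⟩ => ⟨(hk i).linearEquiv.symm.trans g⟩,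
      fun ⟨g⟩ => ⟨(hk i).linearEquiv.trans g⟩⟩
  · have hM' : ¬∃ s : CompositionSeries (Submodule B M'), s.head = ⊥ ∧ s.last = ⊤ :=
      fun h => hM (exists_compositionSeries_of_semilinearEquiv e.symm h)
    rw [compMult, compMult, dif_neg hM, dif_neg hM']

end SemilinearTransport

theorem formSum_comm {R ι : Type u} [CommRing R] [Fintype ι] {φ : ι → ι → R}
    (hφ : ∀ s t, φ s t = φ t s) (x y : ι → R) : formSum φ x y = formSum φ y x := by
  rw [formSum, formSum, Finset.sum_comm]
  refine Finset.sum_congr rfl fun t _ => Finset.sum_congr rfl fun s _ => ?_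
  rw [hφ]
  ring

namespace CellDatum

variable {R A Λp : Type u} [CommRing R] [Ring A] [Algebra R A] [PartialOrder Λp]
  {T : Λp → Type u} [∀ l, Fintype (T l)] (D : CellDatum R A Λp T)

theorem star_star (x : A) : D.star (D.star x) = x := by
  have h : D.star ∘ₗ D.star = LinearMap.id := D.basis.ext fun ⟨l, s, t⟩ => by
    simp [D.basis_eq, D.star_c]
  exact DFunLike.congr_fun h x

def starRingEquiv : A ≃+* Aᵐᵒᵖ where
  toFun a := op (D.star a)
  invFun m := D.star m.unop
  left_inv := D.star_star
  right_inv m := by simp [D.star_star]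
  map_mul' a b := by simp [D.star_mul]
  map_add' a b := by simp

instance : RingHomInvPair (D.starRingEquiv : A →+* Aᵐᵒᵖ) D.starRingEquiv.symm :=
  .of_ringEquiv _

instance : RingHomInvPair (D.starRingEquiv.symm : Aᵐᵒᵖ →+* A) D.starRingEquiv :=
  .of_ringEquiv_symm _

theorem star_mem_Aup {l : Λp} {x : A} (hx : x ∈ D.Aup l) : D.star x ∈ D.Aup l := by
  suffices (D.Aup l).map D.star ≤ D.Aup l from this ⟨x, hx, rfl⟩
  rw [Aup, Submodule.map_span, Submodule.span_le]
  rintro _ ⟨_, ⟨l', s', t', hl, rfl⟩, rfl⟩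
  exact Submodule.subset_span ⟨l', t', s', hl, D.star_c l' s' t'⟩

theorem eq_zero_of_smul_c_mem_Aup {l : Λp} {u v : T l} {r : R}
    (h : r • D.c l u v ∈ D.Aup l) : r = 0 := by
  have hAup : D.Aup l = Submodule.span R (D.basis '' {i | l < i.1}) := by
    rw [Aup]
    congr 1
    ext x
    constructor
    · rintro ⟨l', s', t', hl, rfl⟩
      exact ⟨⟨l', (s', t')⟩, hl, D.basis_eq l' s' t'⟩
    · rintro ⟨⟨l', s', t'⟩, hl, rfl⟩
      exact ⟨l', s', t', hl, D.basis_eq l' s' t'⟩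
  rw [hAup, Module.Basis.mem_span_image] at h
  by_contra hr
  refine lt_irrefl l (h (a := ⟨l, (u, v)⟩) ?_)
  simpa [Finsupp.mem_support_iff, ← D.basis_eq] using hr

variable {D}

theorem FormData.symm {φ : ∀ l, T l → T l → R} (hφ : D.FormData φ) (l : Λp) (s t : T l) :
    φ l s t = φ l t s := by
  -- `star` turns the congruence for `c l t t * c l s s` into one for `c l s s * c l t t`
  have hstar := D.star_mem_Aup (hφ l t s t s)
  rw [map_sub, map_smul, D.star_mul, D.star_c, D.star_c, D.star_c] at hstar
  have hdiff := Submodule.sub_mem _ hstar (hφ l s t s t)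
  rw [sub_sub_sub_cancel_left, ← sub_smul] at hdiff
  exact sub_eq_zero.1 (D.eq_zero_of_smul_c_mem_Aup hdiff)

variable [∀ l, DecidableEq (T l)] [∀ l, Module Aᵐᵒᵖ (T l → R)]
  [∀ l, Module A (T l → R)]

theorem smul_eq_op_star_smul (hR : D.RightStd) (hL : D.LeftStd) (l : Λp) (a : A)
    (x : T l → R) : a • x = op (D.star a) • x := by
  rw [← Finset.univ_sum_single x, Finset.smul_sum, Finset.smul_sum]
  refine Finset.sum_congr rfl fun t _ => ?_
  have hsingle : Pi.single t (x t) = x t • (Pi.single t 1 : T l → R) := by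
    rw [← Pi.single_smul', smul_eq_mul, mul_one]
  rw [hsingle, hL.1, hR.1, hL.2, hR.2]

def stdSemilinearEquiv (hR : D.RightStd) (hL : D.LeftStd) (l : Λp) :
    (T l → R) ≃ₛₗ[(D.starRingEquiv : A →+* Aᵐᵒᵖ)] (T l → R) :=
  { AddEquiv.refl (T l → R) with map_smul' := smul_eq_op_star_smul hR hL l }

end CellDatum

theorem stmt_0_general
    {R A : Type u} [Field R] [Ring A] [Algebra R A]
    {Λp : Type u} [PartialOrder Λp]
    {T : Λp → Type u} [∀ l, Fintype (T l)] [∀ l, DecidableEq (T l)]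
    (D : CellDatum R A Λp T)
    [∀ l, Module Aᵐᵒᵖ (T l → R)] [∀ l, Module A (T l → R)]
    (hRStd : D.RightStd) (hLStd : D.LeftStd)
    (φ : ∀ l, T l → T l → R) (hφ : D.FormData φ)
    (radW : ∀ l, Submodule Aᵐᵒᵖ (T l → R))
    (hradW : ∀ (l) (x : T l → R), x ∈ radW l ↔ ∀ y, formSum (φ l) x y = 0)
    (radWl : ∀ l, Submodule A (T l → R))
    (hradWl : ∀ (l) (x : T l → R), x ∈ radWl l ↔ ∀ y, formSum (φ l) y x = 0)
    (lam mu : Λp) :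
    compMult Aᵐᵒᵖ (T lam → R) ((T mu → R) ⧸ radW mu) =
      compMult A (T lam → R) ((T mu → R) ⧸ radWl mu) := by
  have hrad : (radWl mu).map (CellDatum.stdSemilinearEquiv hRStd hLStd mu :
      (T mu → R) →ₛₗ[(D.starRingEquiv : A →+* Aᵐᵒᵖ)] (T mu → R)) = radW mu := by
    ext x
    rw [Submodule.map_equiv_eq_comap_symm, Submodule.mem_comap, hradW, hradWl]
    simp_rw [formSum_comm (hφ.symm mu) x]
    rfl
  exact (compMult_eq_of_semilinearEquiv (CellDatum.stdSemilinearEquiv hRStd hLStd lam)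
    (Submodule.Quotient.equiv _ _ (CellDatum.stdSemilinearEquiv hRStd hLStd mu) hrad)).symm

/-- over a field, the decomposition numbers computed from right standard
modules agree with those computed from left standard modules:
`[W^λ : L^μ]_A = [ᶠW^λ : ᶠL^μ]_A` for `λ ∈ Λ⁺` and `μ ∈ Λ⁺₀`. -/
theorem stmt_0
    {R A : Type u} [Field R] [Ring A] [Algebra R A]
    {Λp : Type u} [PartialOrder Λp] [Fintype Λp]
    {T : Λp → Type u} [∀ l, Fintype (T l)] [∀ l, DecidableEq (T l)]
    (D : CellDatum R A Λp T)
    [∀ l, Module Aᵐᵒᵖ (T l → R)] [∀ l, Module A (T l → R)]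
    (hRStd : D.RightStd) (hLStd : D.LeftStd)
    (φ : ∀ l, T l → T l → R) (hφ : D.FormData φ)
    (radW : ∀ l, Submodule Aᵐᵒᵖ (T l → R))
    (hradW : ∀ (l) (x : T l → R), x ∈ radW l ↔ ∀ y, formSum (φ l) x y = 0)
    (radWl : ∀ l, Submodule A (T l → R))
    (hradWl : ∀ (l) (x : T l → R), x ∈ radWl l ↔ ∀ y, formSum (φ l) y x = 0)
    (lam mu : Λp) (hmu : Nontrivial ((T mu → R) ⧸ radW mu)) :
    compMult Aᵐᵒᵖ (T lam → R) ((T mu → R) ⧸ radW mu) =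
      compMult A (T lam → R) ((T mu → R) ⧸ radWl mu) :=
  stmt_0_general D hRStd hLStd φ hφ radW hradW radWl hradWl lam mu
end
end

section
/- Under Assumption (A1)–(A4), for each μ ∈ Λ the idempotent e_μ can be written as an R-linear combination of cellular basis elements c^λ_{s,t} with λ ≥ μ and s,t ∈ T(λ,μ). -/
open MulOpposite

noncomputable section

universe u

/-! Since `e μ` is idempotent, `e μ = e μ * e μ * e μ`; expand the middle factor by (A3). By (A4)
each index lies in some `T(λ,ν)`, so orthogonality of the `e ν` makes `e μ * c^λ_{s,t} * e μ` equal to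
`c^λ_{s,t}` when `s, t ∈ T(λ,μ)` and to `0` otherwise. -/

namespace CellDatum.IdemData

variable {R A : Type u} [CommRing R] [Ring A] [Algebra R A]
  {Λp : Type u} [PartialOrder Λp] {T : Λp → Type u} [∀ l, Fintype (T l)]
  {Λt M : Type u} [PartialOrder Λt] [Fintype M]
  {D : CellDatum R A Λp T} {ι : Λp → Λt} {κ : M → Λt} {e : M → A}

theorem exists_mem_Tset (hA : D.IdemData ι κ e) (l : Λp) (t : T l) :
    ∃ μ, t ∈ D.Tset e l μ :=
  hA.exists_idem l t

theorem c_mul_eq_zero_of_notMem_Tset (hA : D.IdemData ι κ e) {l : Λp} (s : T l) {t : T l}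
    {μ : M} (ht : t ∉ D.Tset e l μ) : D.c l s t * e μ = 0 := by
  obtain ⟨ν, hν⟩ := hA.exists_mem_Tset l t
  have hνμ : ν ≠ μ := by
    rintro rfl
    exact ht hν
  rw [← hν.1 s, mul_assoc, hA.orth ν μ hνμ, mul_zero]

theorem mul_c_eq_zero_of_notMem_Tset (hA : D.IdemData ι κ e) {l : Λp} {s : T l} {μ : M}
    (hs : s ∉ D.Tset e l μ) (t : T l) : e μ * D.c l s t = 0 := by
  obtain ⟨ν, hν⟩ := hA.exists_mem_Tset l s
  have hμν : μ ≠ ν := by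
    rintro rfl
    exact hs hν
  rw [← hν.2 t, ← mul_assoc, hA.orth μ ν hμν, zero_mul]

theorem mul_c_mul_mem_span (hA : D.IdemData ι κ e) {μ : M} {l : Λp} (hl : κ μ ≤ ι l)
    (s t : T l) :
    e μ * D.c l s t * e μ ∈ Submodule.span R {x : A | ∃ (l : Λp) (s t : T l),
      κ μ ≤ ι l ∧ s ∈ D.Tset e l μ ∧ t ∈ D.Tset e l μ ∧ x = D.c l s t} := by
  by_cases ht : t ∈ D.Tset e l μ
  · by_cases hs : s ∈ D.Tset e l μ
    · rw [mul_assoc, ht.1 s, hs.2 t]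
      exact Submodule.subset_span ⟨l, s, t, hl, hs, ht, rfl⟩
    · rw [hA.mul_c_eq_zero_of_notMem_Tset hs t, zero_mul]
      exact Submodule.zero_mem _
  · rw [mul_assoc, hA.c_mul_eq_zero_of_notMem_Tset s ht, mul_zero]
    exact Submodule.zero_mem _

end CellDatum.IdemData

theorem stmt_7_general
    {R A : Type u} [CommRing R] [Ring A] [Algebra R A]
    {Λp : Type u} [PartialOrder Λp]
    {T : Λp → Type u} [∀ l, Fintype (T l)]
    {Λt M : Type u} [PartialOrder Λt] [Fintype M]
    (D : CellDatum R A Λp T)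
    (ι : Λp → Λt) (κ : M → Λt) (e : M → A)
    (hA : D.IdemData ι κ e) :
    ∀ μ : M, e μ ∈ Submodule.span R {x : A | ∃ (l : Λp) (s t : T l),
      κ μ ≤ ι l ∧ s ∈ D.Tset e l μ ∧ t ∈ D.Tset e l μ ∧ x = D.c l s t} := by
  intro μ
  set sandwich := LinearMap.mulLeftRight R (e μ, e μ)
  have h_sandwich : sandwich (e μ) = e μ := by
    rw [LinearMap.mulLeftRight_apply, hA.idem, hA.idem]
  have h_span_le : Submodule.span R {x : A | ∃ l s t, κ μ ≤ ι l ∧ x = D.c l s t} ≤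
      (Submodule.span R {x : A | ∃ (l : Λp) (s t : T l), κ μ ≤ ι l ∧ s ∈ D.Tset e l μ ∧
        t ∈ D.Tset e l μ ∧ x = D.c l s t}).comap sandwich := by
    rw [Submodule.span_le]
    rintro _ ⟨l, s, t, hl, rfl⟩
    exact hA.mul_c_mul_mem_span hl s t
  rw [← h_sandwich]
  exact h_span_le (hA.mem_span μ)

/-- under (A1)–(A4), each idempotent `e μ` lies in the span of the
cellular basis elements `c^λ_{st}` with `λ ≥ μ` and `s, t ∈ T(λ,μ)`. -/
theorem stmt_7
    {R A : Type u} [CommRing R] [Ring A] [Algebra R A]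
    {Λp : Type u} [PartialOrder Λp] [Fintype Λp]
    {T : Λp → Type u} [∀ l, Fintype (T l)]
    {Λt M : Type u} [PartialOrder Λt] [Fintype M]
    (D : CellDatum R A Λp T)
    (ι : Λp → Λt) (κ : M → Λt) (e : M → A)
    (hA : D.IdemData ι κ e) :
    ∀ μ : M, e μ ∈ Submodule.span R {x : A | ∃ (l : Λp) (s t : T l),
      κ μ ≤ ι l ∧ s ∈ D.Tset e l μ ∧ t ∈ D.Tset e l μ ∧ x = D.c l s t} :=
  stmt_7_general D ι κ e hA
end
end
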